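/- arXiv:1312.4789 — 4 statements merged into one kernel-verified Lean document; each statement's English description precedes it below -/
import Mathlib

section
/- If Λ is a graph in the class 𝒯, then either Λ is isomorphic to K_{2,2} or Λ contains the complete bipartite graph K_{2,3} as a (not necessarily induced) subgraph. -/
open SimpleGraph

/-- `K_{2,2}`: the 4-cycle, the complete bipartite graph between `{0,2}` and `{1,3}`. -/
def K22 : SimpleGraph (Fin 4) :=
  SimpleGraph.fromRel (fun i j => (i.val + j.val) % 2 = 1)

/-- Coning off the set `Λ` in `G`: add one new vertex adjacent to every vertex of `Λ`. -/
def coneGraph {V : Type} (G : SimpleGraph V) (Λ : Set V) : SimpleGraph (Option V) :=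
  SimpleGraph.fromRel (fun x y =>
    (∃ u v, x = some u ∧ y = some v ∧ G.Adj u v) ∨ (x = none ∧ ∃ v ∈ Λ, y = some v))

/-- The class `𝒯` of thick graphs: the smallest class of finite graphs (closed under
isomorphism) containing `K_{2,2}` and closed under coning off induced subgraphs of
diameter greater than one and under generalized unions along non-clique subgraphs. -/
inductive Thick : ∀ {V : Type}, SimpleGraph V → Prop
  | base : Thick K22
  | cone {V : Type} [Fintype V] (G : SimpleGraph V) (Λ : Set V) (hG : Thick G)
      (hΛ : ∃ u ∈ Λ, ∃ v ∈ Λ, u ≠ v ∧ ¬ G.Adj u v) : Thick (coneGraph G Λ)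
  | union {V : Type} [Fintype V] (G : SimpleGraph V) (V₁ V₂ : Set V)
      (hcover : V₁ ∪ V₂ = Set.univ)
      (h₁ : Thick (G.induce V₁)) (h₂ : Thick (G.induce V₂))
      (hint : ∃ u ∈ V₁ ∩ V₂, ∃ v ∈ V₁ ∩ V₂, u ≠ v ∧ ¬ G.Adj u v) : Thick G
  | iso {V W : Type} {G : SimpleGraph V} {G' : SimpleGraph W} (e : G ≃g G') (hG : Thick G) :
      Thick G'

/-- `K_{2,3}`: the complete bipartite graph with parts `{0,1}` and `{2,3,4}`. -/
def K23 : SimpleGraph (Fin 5) :=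
  SimpleGraph.fromRel (fun i j => i.val < 2 ∧ 2 ≤ j.val)

/-! Three common neighbours of two distinct vertices span a `K_{2,3}`, and containing `K_{2,3}`
is preserved by all constructions of `𝒯`, so it suffices to follow graphs isomorphic to `K_{2,2}`.
There, two distinct non-adjacent vertices `u, v` have exactly two common neighbours, and these
four vertices are the whole graph. Coning off a set containing `u, v` adds the apex as a third
common neighbour. In a union of two copies of `K_{2,2}` glued along `u, v`, either the second
copy contributes a third common neighbour, or it lies inside the first copy, and then the union
is the first copy. -/

instance : DecidableRel K22.Adj := fun _ _ => decidable_of_iff' _ (fromRel_adj _ _ _)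

lemma K23_adj_iff {a b : Fin 5} :
    K23.Adj a b ↔ a ≠ b ∧ (a.val < 2 ∧ 2 ≤ b.val ∨ b.val < 2 ∧ 2 ≤ a.val) :=
  fromRel_adj _ a b

lemma K23_isContained_iff {V : Type} {G : SimpleGraph V} :
    K23 ⊑ G ↔
      ∃ f : Fin 5 → V, Function.Injective f ∧ ∀ a b, K23.Adj a b → G.Adj (f a) (f b) :=
  ⟨fun ⟨f⟩ => ⟨f, f.injective, fun _ _ h => f.toHom.map_adj h⟩,
    fun ⟨f, hf, hadj⟩ => ⟨⟨⟨f, hadj _ _⟩, hf⟩⟩⟩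

lemma K23_isContained_of_three_commonNeighbors {V : Type} {G : SimpleGraph V} {u v p q r : V}
    (huv : u ≠ v) (hp : p ∈ G.commonNeighbors u v) (hq : q ∈ G.commonNeighbors u v)
    (hr : r ∈ G.commonNeighbors u v) (hpq : p ≠ q) (hpr : p ≠ r) (hqr : q ≠ r) : K23 ⊑ G := by
  rw [mem_commonNeighbors] at hp hq hr
  refine K23_isContained_iff.2 ⟨![u, v, p, q, r], fun a b hab => ?_, fun a b hab => ?_⟩ <;>
    fin_cases a <;> fin_cases b <;>
      simp_all [eq_comm, K23_adj_iff, G.adj_comm _ u, G.adj_comm _ v, hp.1.ne, hp.2.ne, hq.1.ne,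
        hq.2.ne, hr.1.ne, hr.2.ne]

lemma K22_exists_commonNeighbors : ∀ x y : Fin 4, x ≠ y → ¬K22.Adj x y →
    ∃ p q : Fin 4, p ≠ q ∧ K22.Adj x p ∧ K22.Adj y p ∧ K22.Adj x q ∧ K22.Adj y q ∧
      ∀ z, z = x ∨ z = y ∨ z = p ∨ z = q := by
  decide

lemma exists_commonNeighbors_of_iso_K22 {V : Type} {G : SimpleGraph V} (e : G ≃g K22)
    {u v : V} (huv : u ≠ v) (hn : ¬G.Adj u v) :
    ∃ p q, p ≠ q ∧ p ∈ G.commonNeighbors u v ∧ q ∈ G.commonNeighbors u v ∧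
      ∀ z, z = u ∨ z = v ∨ z = p ∨ z = q := by
  obtain ⟨p, q, hpq, hup, hvp, huq, hvq, hall⟩ :=
    K22_exists_commonNeighbors (e u) (e v) (e.injective.ne huv) (by rwa [e.map_adj_iff])
  refine ⟨e.symm p, e.symm q, e.symm.injective.ne hpq, ?_, ?_, fun z => ?_⟩
  · simp only [mem_commonNeighbors, ← e.map_adj_iff, e.apply_symm_apply]
    exact ⟨hup, hvp⟩
  · simp only [mem_commonNeighbors, ← e.map_adj_iff, e.apply_symm_apply]
    exact ⟨huq, hvq⟩
  · simpa only [← e.injective.eq_iff, e.apply_symm_apply] using hall (e z)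

lemma exists_commonNeighbors_of_induce_iso_K22 {V : Type} {G : SimpleGraph V} {s : Set V}
    (e : G.induce s ≃g K22) {u v : V} (hu : u ∈ s) (hv : v ∈ s) (huv : u ≠ v)
    (hn : ¬G.Adj u v) :
    ∃ p q, p ≠ q ∧ p ∈ G.commonNeighbors u v ∧ q ∈ G.commonNeighbors u v ∧
      s = {u, v, p, q} := by
  obtain ⟨p, q, hpq, hp, hq, hall⟩ :=
    exists_commonNeighbors_of_iso_K22 e (u := ⟨u, hu⟩) (v := ⟨v, hv⟩) (by simpa using huv) hn
  refine ⟨p, q, Subtype.coe_injective.ne hpq, hp, hq, ?_⟩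
  ext z
  refine ⟨fun hz => ?_, ?_⟩
  · simpa [Subtype.ext_iff] using hall ⟨z, hz⟩
  · rintro (rfl | rfl | rfl | rfl) <;> simp [hu, hv]

section Cone

variable {V : Type} {G : SimpleGraph V} {Λ : Set V}

@[simp]
lemma coneGraph_adj_some_some {u v : V} : (coneGraph G Λ).Adj (some u) (some v) ↔ G.Adj u v := by
  simp only [coneGraph, fromRel_adj, ne_eq, Option.some.injEq, reduceCtorEq, false_and, or_false,
    exists_and_left, exists_eq_left']
  exact ⟨fun ⟨_, h⟩ => h.elim id (·.symm), fun h => ⟨h.ne, Or.inl h⟩⟩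

@[simp]
lemma coneGraph_adj_none_some {v : V} : (coneGraph G Λ).Adj none (some v) ↔ v ∈ Λ := by
  simp [coneGraph, fromRel_adj]

lemma isContained_coneGraph : G ⊑ coneGraph G Λ :=
  ⟨⟨⟨some, coneGraph_adj_some_some.2⟩, Option.some_injective V⟩⟩

lemma K23_isContained_coneGraph_of_iso_K22 (e : G ≃g K22)
    (hΛ : ∃ u ∈ Λ, ∃ v ∈ Λ, u ≠ v ∧ ¬G.Adj u v) : K23 ⊑ coneGraph G Λ := by
  obtain ⟨u, hu, v, hv, huv, hn⟩ := hΛ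
  obtain ⟨p, q, hpq, hp, hq, -⟩ := exists_commonNeighbors_of_iso_K22 e huv hn
  have hcone : none ∈ (coneGraph G Λ).commonNeighbors (some u) (some v) := by
    simp [mem_commonNeighbors, (coneGraph G Λ).adj_comm _ none, hu, hv]
  refine K23_isContained_of_three_commonNeighbors (p := some p) (q := some q) (r := none)
    (by simpa using huv) ?_ ?_ hcone (by simpa using hpq) (by simp) (by simp)
  · simpa [mem_commonNeighbors] using hp
  · simpa [mem_commonNeighbors] using hq

end Cone

lemma iso_K22_or_K23_isContained_of_union_K22 {V : Type} {G : SimpleGraph V} {V₁ V₂ : Set V}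
    (hcover : V₁ ∪ V₂ = Set.univ) (e₁ : G.induce V₁ ≃g K22) (e₂ : G.induce V₂ ≃g K22)
    (hint : ∃ u ∈ V₁ ∩ V₂, ∃ v ∈ V₁ ∩ V₂, u ≠ v ∧ ¬G.Adj u v) :
    Nonempty (G ≃g K22) ∨ K23 ⊑ G := by
  obtain ⟨u, ⟨hu₁, hu₂⟩, v, ⟨hv₁, hv₂⟩, huv, hn⟩ := hint
  obtain ⟨p₁, q₁, hpq₁, hp₁, hq₁, rfl⟩ :=
    exists_commonNeighbors_of_induce_iso_K22 e₁ hu₁ hv₁ huv hn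
  obtain ⟨p₂, q₂, -, hp₂, hq₂, rfl⟩ :=
    exists_commonNeighbors_of_induce_iso_K22 e₂ hu₂ hv₂ huv hn
  by_cases hp : p₂ ∈ ({p₁, q₁} : Set V)
  · by_cases hq : q₂ ∈ ({p₁, q₁} : Set V)
    · left
      have hsub : ({u, v, p₂, q₂} : Set V) ⊆ {u, v, p₁, q₁} :=
        Set.insert_subset_insert <| Set.insert_subset_insert <|
          Set.insert_subset hp (Set.singleton_subset_iff.2 hq)
      rw [Set.union_eq_self_of_subset_right hsub] at hcover
      rw [hcover] at e₁
      exact ⟨G.induceUnivIso.symm.trans e₁⟩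
    · right
      simp only [Set.mem_insert_iff, Set.mem_singleton_iff, not_or] at hq
      exact K23_isContained_of_three_commonNeighbors huv hp₁ hq₁ hq₂ hpq₁
        (Ne.symm hq.1) (Ne.symm hq.2)
  · right
    simp only [Set.mem_insert_iff, Set.mem_singleton_iff, not_or] at hp
    exact K23_isContained_of_three_commonNeighbors huv hp₁ hq₁ hp₂ hpq₁
      (Ne.symm hp.1) (Ne.symm hp.2)

theorem Thick.iso_K22_or_K23_isContained {V : Type} {G : SimpleGraph V} (h : Thick G) :
    Nonempty (G ≃g K22) ∨ K23 ⊑ G := by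
  induction h with
  | base => exact .inl ⟨.refl⟩
  | cone G Λ _ hΛ ih =>
    exact .inr <| ih.elim (fun ⟨e⟩ => K23_isContained_coneGraph_of_iso_K22 e hΛ)
      (·.trans isContained_coneGraph)
  | union G V₁ V₂ hcover _ _ hint ih₁ ih₂ =>
    rcases ih₁ with he₁ | h₁
    · rcases ih₂ with he₂ | h₂
      · obtain ⟨e₁⟩ := he₁
        obtain ⟨e₂⟩ := he₂
        exact iso_K22_or_K23_isContained_of_union_K22 hcover e₁ e₂ hint
      · exact .inr (h₂.trans ⟨Copy.induce G V₂⟩)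
    · exact .inr (h₁.trans ⟨Copy.induce G V₁⟩)
  | iso e _ ih => exact ih.imp (fun ⟨e'⟩ => ⟨e.symm.trans e'⟩) (·.trans e.isContained)

theorem thick_K22_or_contains_K23_general {V : Type} (G : SimpleGraph V)
    (h : Thick G) :
    Nonempty (G ≃g K22) ∨
      ∃ f : Fin 5 → V, Function.Injective f ∧ ∀ a b, K23.Adj a b → G.Adj (f a) (f b) :=
  h.iso_K22_or_K23_isContained.imp_right K23_isContained_iff.1

/-- Every graph in `𝒯` is either isomorphic to `K_{2,2}` or contains `K_{2,3}` as a
(not necessarily induced) subgraph. -/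
theorem thick_K22_or_contains_K23 {V : Type} [Fintype V] (G : SimpleGraph V)
    (h : Thick G) :
    Nonempty (G ≃g K22) ∨
      ∃ f : Fin 5 → V, Function.Injective f ∧ ∀ a b, K23.Adj a b → G.Adj (f a) (f b) :=
  thick_K22_or_contains_K23_general G h
end

section
/- Define f(n) = 2n · Σ_{i=0}^{n} C(n,i) · 2^{−n − i(i−1)/2}. Then f(n) → 0 as n → ∞, and the series Σ_{n≥0} f(n) converges. -/
open Filter

/-- The function `f(n) = 2n ∑_{i=0}^{n} C(n,i) 2^{-n - i(i-1)/2}`. -/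
noncomputable def fBound (n : ℕ) : ℝ :=
  2 * n * ∑ i ∈ Finset.range (n + 1), (n.choose i : ℝ) * ((2 : ℝ) ^ (n + i * (i - 1) / 2))⁻¹

/-!
Since `i - 1 ≤ i (i - 1) / 2`, every weight `2^{-n - i(i-1)/2}` is at most `2 · 2^{-n} · 2^{-i}`,
and the binomial theorem turns the sum into `2 (3/4)^n`. Hence `f(n) ≤ 4 n (3/4)^n`, which is
summable, and a summable sequence tends to `0`.
-/

open Finset

theorem Nat.le_mul_sub_one_div_two_add_one (i : ℕ) : i ≤ i * (i - 1) / 2 + 1 := by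
  rcases i with _ | _ | k
  · simp
  · simp
  · have : (k + 1) * 2 ≤ (k + 2) * (k + 1) := by nlinarith
    have := (Nat.le_div_iff_mul_le two_pos).2 this
    simpa using this

theorem inv_two_pow_add_mul_sub_one_div_two_le (n i : ℕ) :
    ((2 : ℝ) ^ (n + i * (i - 1) / 2))⁻¹ ≤ 2 * ((2 : ℝ) ^ (n + i))⁻¹ := by
  have h : (2 : ℝ) ^ (n + i) ≤ 2 ^ (n + i * (i - 1) / 2) * 2 := by
    rw [← pow_succ]
    exact pow_le_pow_right₀ (by norm_num) (by have := i.le_mul_sub_one_div_two_add_one; omega)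
  rw [← div_eq_mul_inv, inv_le_comm₀ (by positivity) (by positivity), inv_div]
  rwa [div_le_iff₀ two_pos]

theorem sum_choose_mul_inv_two_pow (n : ℕ) :
    ∑ i ∈ range (n + 1), (n.choose i : ℝ) * (2⁻¹) ^ i = (3 / 2) ^ n := by
  rw [show (3 / 2 : ℝ) = 2⁻¹ + 1 by norm_num, add_pow]
  refine sum_congr rfl fun i _ => ?_
  ring

theorem fBound_nonneg (n : ℕ) : 0 ≤ fBound n := by
  unfold fBound
  positivity

theorem fBound_le (n : ℕ) : fBound n ≤ 4 * n * (3 / 4) ^ n := by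
  calc fBound n
      ≤ 2 * n * ∑ i ∈ range (n + 1), (n.choose i : ℝ) * (2 * ((2 : ℝ) ^ (n + i))⁻¹) := by
        unfold fBound
        gcongr with i
        exact inv_two_pow_add_mul_sub_one_div_two_le n i
    _ = 4 * n * ((2⁻¹) ^ n * ∑ i ∈ range (n + 1), (n.choose i : ℝ) * (2⁻¹) ^ i) := by
        simp only [mul_sum, pow_add, mul_inv, inv_pow]
        refine sum_congr rfl fun i _ => ?_
        ring
    _ = 4 * n * (3 / 4) ^ n := by
        rw [sum_choose_mul_inv_two_pow, ← mul_pow]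
        norm_num

/-- `f(n) → 0` as `n → ∞`, and moreover `∑_{n ≥ 0} f(n) < ∞`. -/
theorem fBound_tendsto_zero_and_summable :
    Tendsto fBound atTop (nhds 0) ∧ Summable fBound := by
  have hdom : Summable fun n : ℕ => 4 * n * (3 / 4 : ℝ) ^ n := by
    simpa [mul_assoc] using
      (summable_pow_mul_geometric_of_norm_lt_one 1 (r := (3 / 4 : ℝ)) (by norm_num)).mul_left 4
  have hsum : Summable fBound := .of_nonneg_of_le fBound_nonneg fBound_le hdom
  exact ⟨hsum.tendsto_atTop_zero, hsum⟩
end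

section
/- Let (π_n) be a sequence in [0,1], f : ℕ → [0,∞) with f(n) → 0, and suppose π_{2n} ≤ π_n² + f(n) for all n. Fix k ≥ 1 and suppose the subsequence (π_{k·2^m})_{m∈ℕ} does not have 0 as an accumulation point. Then π_{k·2^m} → 1 as m → ∞. -/
/-!
The liminf `L` of `a m = π (k * 2 ^ m)` is its least cluster point. Along a subsequence
converging to `L`, the shifted terms are bounded by `a² + f → L²`, and their cluster points
are cluster points of `a`, hence at least `L`; so `L ≤ L²`. Since `0` is not a cluster point,
`L > 0`, and `L ≤ 1` forces `L = 1`, which for a sequence bounded by `1` means convergence.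
-/

open Filter Topology

theorem liminf_le_apply_liminf_of_le_apply_add {u g : ℕ → ℝ} {F : ℝ → ℝ}
    (hF : Continuous F) (hu_le : IsBoundedUnder (· ≤ ·) atTop u)
    (hu_ge : IsBoundedUnder (· ≥ ·) atTop u)
    (hg : Tendsto g atTop (𝓝 0)) (hrec : ∀ n, u (n + 1) ≤ F (u n) + g n) :
    liminf u atTop ≤ F (liminf u atTop) := by
  set L := liminf u atTop
  obtain ⟨φ, hφ, huφ⟩ := (MapClusterPt.liminf hu_le.isCoboundedUnder_ge hu_ge).tendsto_subseq
  have hshift : Tendsto (fun m => φ m + 1) atTop atTop :=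
    (tendsto_add_atTop_nat 1).comp hφ.tendsto_atTop
  have hbound : Tendsto (fun m => F (u (φ m)) + g (φ m)) atTop (𝓝 (F L)) := by
    simpa using ((hF.tendsto L).comp huφ).add (hg.comp hφ.tendsto_atTop)
  calc L ≤ liminf (fun m => u (φ m + 1)) atTop :=
        hshift.liminf_le_liminf_comp (hshift.isBoundedUnder_comp hu_le).isCoboundedUnder_ge hu_ge
    _ ≤ liminf (fun m => F (u (φ m)) + g (φ m)) atTop :=
        liminf_le_liminf (Eventually.of_forall fun m => hrec (φ m))
          (hshift.isBoundedUnder_comp hu_ge) hbound.isCoboundedUnder_ge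
    _ = F L := hbound.liminf_eq

theorem tendsto_one_of_no_accumulation_zero_general (π : ℕ → ℝ) (hπ : ∀ n, π n ∈ Set.Icc (0:ℝ) 1)
    (f : ℕ → ℝ) (hf : Tendsto f atTop (nhds 0))
    (hrec : ∀ n, π (2 * n) ≤ (π n) ^ 2 + f n)
    (k : ℕ) (hk : 1 ≤ k)
    (hacc : ¬ ∃ φ : ℕ → ℕ, StrictMono φ ∧
      Tendsto (fun m => π (k * 2 ^ φ m)) atTop (nhds 0)) :
    Tendsto (fun m => π (k * 2 ^ m)) atTop (nhds 1) := by
  set a : ℕ → ℝ := fun m => π (k * 2 ^ m)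
  have ha_le : IsBoundedUnder (· ≤ ·) atTop a := isBoundedUnder_of ⟨1, fun m => (hπ _).2⟩
  have ha_ge : IsBoundedUnder (· ≥ ·) atTop a := isBoundedUnder_of ⟨0, fun m => (hπ _).1⟩
  have hindex : Tendsto (fun m => k * 2 ^ m) atTop atTop :=
    tendsto_atTop_mono (fun m => Nat.le_mul_of_pos_left _ hk)
      (tendsto_pow_atTop_atTop_of_one_lt one_lt_two)
  have hrec_a : ∀ m, a (m + 1) ≤ a m ^ 2 + f (k * 2 ^ m) := fun m => by
    simpa only [a, pow_succ, mul_comm, mul_left_comm] using hrec (k * 2 ^ m)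
  set L := liminf a atTop
  have hL_sq : L ≤ L ^ 2 :=
    liminf_le_apply_liminf_of_le_apply_add (F := (· ^ 2)) (continuous_pow 2) ha_le ha_ge
      (hf.comp hindex) hrec_a
  have hL_ne : L ≠ 0 := fun hL0 => hacc <|
    hL0 ▸ (MapClusterPt.liminf ha_le.isCoboundedUnder_ge ha_ge).tendsto_subseq
  have hL_nonneg : 0 ≤ L := le_liminf_of_le ha_le.isCoboundedUnder_ge
    (Eventually.of_forall fun m => (hπ _).1)
  have hL_one : 1 ≤ L := by nlinarith [lt_of_le_of_ne hL_nonneg (Ne.symm hL_ne)]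
  exact tendsto_of_le_liminf_of_limsup_le hL_one
    (limsup_le_of_le ha_ge.isCoboundedUnder_le (Eventually.of_forall fun m => (hπ _).2))

/-- If `(π_n) ⊆ [0,1]` satisfies `π_{2n} ≤ π_n² + f(n)` with `f ≥ 0`, `f → 0`, and for
some `k ≥ 1` the subsequence `(π_{k·2^m})_m` has no subsequence converging to `0`, then
`π_{k·2^m} → 1`. -/
theorem tendsto_one_of_no_accumulation_zero (π : ℕ → ℝ) (hπ : ∀ n, π n ∈ Set.Icc (0:ℝ) 1)
    (f : ℕ → ℝ) (hf0 : ∀ n, 0 ≤ f n) (hf : Tendsto f atTop (nhds 0))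
    (hrec : ∀ n, π (2 * n) ≤ (π n) ^ 2 + f n)
    (k : ℕ) (hk : 1 ≤ k)
    (hacc : ¬ ∃ φ : ℕ → ℕ, StrictMono φ ∧
      Tendsto (fun m => π (k * 2 ^ φ m)) atTop (nhds 0)) :
    Tendsto (fun m => π (k * 2 ^ m)) atTop (nhds 1) :=
  tendsto_one_of_no_accumulation_zero_general π hπ f hf hrec k hk hacc
end

section
/- Let (W, S) be a Coxeter system, let s ∈ S, and set K = S ∖ {s}. Then the subgroup of W generated by W_K ∪ s·W_K·s has index at most 2 in W. -/
/-!
Write `σ` for the simple reflection `s`. The subgroup `H` contains every simple reflection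
`t ≠ s` and every conjugate `σ t σ`, so left multiplication by a simple reflection maps
`H ∪ σ H` into itself: `t` preserves `H` and, via `σ t w = (σ t σ)(σ w)`, also `σ H`, while
`σ` swaps the two. Starting from `1 ∈ H`, induction on word length gives `W = H ∪ σ H`.
-/

namespace Subgroup

variable {G : Type*} [Group G]

theorem index_eq_one_or_two_of_forall_mem_or_mul_mem (H : Subgroup G) (g : G)
    (hcover : ∀ w, w ∈ H ∨ g * w ∈ H) : H.index = 1 ∨ H.index = 2 := by
  by_cases hg : g ∈ H
  · left
    rw [index_eq_one, eq_top_iff]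
    intro w _
    exact (hcover w).elim id fun hgw => by simpa using H.mul_mem (H.inv_mem hg) hgw
  · right
    refine index_eq_two_iff'.mpr ⟨g, fun w => ?_⟩
    rcases hcover w with hw | hgw
    · exact Or.inr ⟨hw, fun hgw => hg (by simpa using H.mul_mem hgw (H.inv_mem hw))⟩
    · exact Or.inl ⟨hgw, fun hw => hg (by simpa using H.mul_mem hgw (H.inv_mem hw))⟩

end Subgroup

namespace CoxeterSystem

variable {B W : Type*} [Group W] {M : CoxeterMatrix B} (cs : CoxeterSystem M W)

theorem mem_or_simple_mul_mem (H : Subgroup W) (s : B)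
    (hsimple : ∀ t, t ≠ s → cs.simple t ∈ H)
    (hconj : ∀ t, t ≠ s → cs.simple s * cs.simple t * cs.simple s ∈ H) (w : W) :
    w ∈ H ∨ cs.simple s * w ∈ H := by
  induction w using cs.simple_induction_left with
  | one => exact Or.inl H.one_mem
  | mul_simple_left w t ih =>
    by_cases ht : t = s
    · subst ht
      rw [← mul_assoc, cs.simple_mul_simple_self, one_mul]
      exact ih.symm
    · have hshift : cs.simple s * (cs.simple t * w)
          = cs.simple s * cs.simple t * cs.simple s * (cs.simple s * w) := by
        simp only [mul_assoc, cs.simple_mul_simple_cancel_left]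
      rw [hshift]
      exact ih.imp (H.mul_mem (hsimple t ht)) (H.mul_mem (hconj t ht))

end CoxeterSystem

/-- Let `(W,S)` be a Coxeter system, `s ∈ S`, and `K = S ∖ {s}`. Then the subgroup of `W`
generated by `W_K ∪ s W_K s` has index at most `2` in `W`. -/
theorem index_le_two_of_parabolic_and_conjugate {B : Type*} {W : Type*} [Group W]
    {M : CoxeterMatrix B} (cs : CoxeterSystem M W) (s : B) :
    letI K : Set B := {t : B | t ≠ s}
    letI WK : Subgroup W := Subgroup.closure (cs.simple '' K)
    letI H : Subgroup W := Subgroup.closure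
      ((WK : Set W) ∪ (fun w => cs.simple s * w * cs.simple s) '' (WK : Set W))
    H.index = 1 ∨ H.index = 2 := by
  have hWK : ∀ t, t ≠ s → cs.simple t ∈ Subgroup.closure (cs.simple '' {t | t ≠ s}) :=
    fun t ht => Subgroup.subset_closure ⟨t, ht, rfl⟩
  refine Subgroup.index_eq_one_or_two_of_forall_mem_or_mul_mem _ (cs.simple s)
    (cs.mem_or_simple_mul_mem _ s (fun t ht => ?_) (fun t ht => ?_))
  · exact Subgroup.subset_closure (Or.inl (hWK t ht))
  · exact Subgroup.subset_closure (Or.inr ⟨cs.simple t, hWK t ht, rfl⟩)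
end
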